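/- arXiv:math/0206178 — 3 statements merged into one kernel-verified Lean document; each statement's English description precedes it below -/
import Mathlib

section
/- One has lim_{n→∞} (log|q_n|)/n = lim_{n→∞} (log|p_n|)/n = lim_{n→∞} (log|p̃_n|)/n = log|μ3|, where μ3 is the unique root of μ^3+2368μ^2−752μ−16 lying in the interval (−2369, −2368). -/
noncomputable section
set_option maxHeartbeats 1000000

open Filter


/-- `a₀(n)` from recursion (1). -/
def a0 (x : ℚ) : ℚ := 41218*x^3 - 48459*x^2 + 20010*x - 2871

/-- `a₁(n)` from recursion (1). -/
def a1 (x : ℚ) : ℚ := 2*(48802112*x^9 + 89030880*x^8 + 36002654*x^7 - 24317344*x^6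
  - 19538418*x^5 + 1311365*x^4 + 3790503*x^3 + 460056*x^2 - 271701*x - 60291)

/-- `a₂(n)` from recursion (1). -/
def a2 (x : ℚ) : ℚ := 3874492*x^8 - 2617900*x^7 - 3144314*x^6 + 2947148*x^5
  + 647130*x^4 - 1182926*x^3 + 115771*x^2 + 170716*x - 44541

/-- The third-order difference equation (1), imposed for all integers `n ≥ 2`. -/
def Rec1 (y : ℕ → ℚ) : Prop := ∀ n : ℕ, 2 ≤ n →
  ((n : ℚ) + 1)^6 * a0 (n : ℚ) * y (n+1) + a1 (n : ℚ) * y n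
    - 4*(2*(n : ℚ) - 1) * a2 (n : ℚ) * y (n-1)
    - 4*((n : ℚ) - 1)^4*(2*(n : ℚ) - 1)*(2*(n : ℚ) - 3) * a0 ((n : ℚ) + 1) * y (n-2) = 0



def A0 (x : ℝ) : ℝ := 41218*x^3 - 48459*x^2 + 20010*x - 2871
def A1 (x : ℝ) : ℝ := 2*(48802112*x^9 + 89030880*x^8 + 36002654*x^7 - 24317344*x^6
  - 19538418*x^5 + 1311365*x^4 + 3790503*x^3 + 460056*x^2 - 271701*x - 60291)
def A2 (x : ℝ) : ℝ := 3874492*x^8 - 2617900*x^7 - 3144314*x^6 + 2947148*x^5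
  + 647130*x^4 - 1182926*x^3 + 115771*x^2 + 170716*x - 44541
def D (x : ℝ) : ℝ := (x+1)^6 * A0 x
def CA (x : ℝ) : ℝ := -A1 x / D x
def CB (x : ℝ) : ℝ := 4*(2*x-1)*A2 x / D x
def CC (x : ℝ) : ℝ := 4*(x-1)^4*(2*x-1)*(2*x-3)*A0 (x+1) / D x

lemma A0_pos {x : ℝ} (hx : 2 ≤ x) : 0 < A0 x := by
  have h : 0 ≤ x - 2 := by linarith
  unfold A0
  nlinarith [pow_nonneg h 2, pow_nonneg h 3, h]

lemma D_pos {x : ℝ} (hx : 2 ≤ x) : 0 < D x := by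
  have := A0_pos hx
  unfold D
  positivity

lemma hI1 {x : ℝ} (hx : 6 ≤ x) : 1500 * D x ≤ A1 x := by
  have h : 0 ≤ x - 6 := by linarith
  unfold D A0 A1
  nlinarith [pow_nonneg h 2, pow_nonneg h 3, pow_nonneg h 4, pow_nonneg h 5,
    pow_nonneg h 6, pow_nonneg h 7, pow_nonneg h 8, pow_nonneg h 9, h]

lemma hI2 {x : ℝ} (hx : 6 ≤ x) : A1 x ≤ 2400 * D x := by
  have h : 0 ≤ x - 6 := by linarith
  unfold D A0 A1
  nlinarith [pow_nonneg h 2, pow_nonneg h 3, pow_nonneg h 4, pow_nonneg h 5,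
    pow_nonneg h 6, pow_nonneg h 7, pow_nonneg h 8, pow_nonneg h 9, h]

lemma hA2_nonneg {x : ℝ} (hx : 6 ≤ x) : 0 ≤ A2 x := by
  have h : 0 ≤ x - 6 := by linarith
  unfold A2
  nlinarith [pow_nonneg h 2, pow_nonneg h 3, pow_nonneg h 4, pow_nonneg h 5,
    pow_nonneg h 6, pow_nonneg h 7, pow_nonneg h 8, h]

lemma hI3 {x : ℝ} (hx : 6 ≤ x) : 4*(2*x-1)*A2 x ≤ 800 * D x := by
  have h : 0 ≤ x - 6 := by linarith
  unfold D A0 A2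
  nlinarith [pow_nonneg h 2, pow_nonneg h 3, pow_nonneg h 4, pow_nonneg h 5,
    pow_nonneg h 6, pow_nonneg h 7, pow_nonneg h 8, pow_nonneg h 9, h]

lemma hI4 {x : ℝ} (hx : 6 ≤ x) :
    4*(x-1)^4*(2*x-1)*(2*x-3)*A0 (x+1) ≤ 20 * D x := by
  have h : 0 ≤ x - 6 := by linarith
  unfold D A0
  nlinarith [pow_nonneg h 2, pow_nonneg h 3, pow_nonneg h 4, pow_nonneg h 5,
    pow_nonneg h 6, pow_nonneg h 7, pow_nonneg h 8, pow_nonneg h 9, h]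

lemma hI4' {x : ℝ} (hx : 6 ≤ x) : 0 ≤ 4*(x-1)^4*(2*x-1)*(2*x-3)*A0 (x+1) := by
  have h1 : (0:ℝ) < A0 (x+1) := A0_pos (by linarith)
  have h4 : (0:ℝ) < (x-1)^4 := pow_pos (by linarith) 4
  exact le_of_lt (mul_pos (mul_pos (mul_pos (mul_pos (by norm_num) h4)
    (by linarith : (0:ℝ) < 2*x-1)) (by linarith : (0:ℝ) < 2*x-3)) h1)

lemma CA_ub {x : ℝ} (hx : 6 ≤ x) : CA x ≤ -1500 := by
  have hD := D_pos (by linarith : (2:ℝ) ≤ x)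
  have := hI1 hx
  rw [CA, div_le_iff₀ hD]
  nlinarith

lemma CA_lb {x : ℝ} (hx : 6 ≤ x) : -2400 ≤ CA x := by
  have hD := D_pos (by linarith : (2:ℝ) ≤ x)
  have := hI2 hx
  rw [CA, le_div_iff₀ hD]
  nlinarith

lemma CB_lb {x : ℝ} (hx : 6 ≤ x) : 0 ≤ CB x := by
  have hD := D_pos (by linarith : (2:ℝ) ≤ x)
  have h2 := hA2_nonneg hx
  exact div_nonneg (mul_nonneg (by linarith) h2) (le_of_lt hD)

lemma CB_ub {x : ℝ} (hx : 6 ≤ x) : CB x ≤ 800 := by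
  have hD := D_pos (by linarith : (2:ℝ) ≤ x)
  have := hI3 hx
  rw [CB, div_le_iff₀ hD]
  nlinarith

lemma CC_lb {x : ℝ} (hx : 6 ≤ x) : 0 ≤ CC x := by
  have hD := D_pos (by linarith : (2:ℝ) ≤ x)
  exact div_nonneg (hI4' hx) (le_of_lt hD)

lemma CC_ub {x : ℝ} (hx : 6 ≤ x) : CC x ≤ 20 := by
  have hD := D_pos (by linarith : (2:ℝ) ≤ x)
  have := hI4 hx
  rw [CC, div_le_iff₀ hD]
  nlinarith


lemma ratlim (P Q pp qq : ℝ → ℝ) (hp : Continuous pp) (hq : Continuous qq)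
    (h0 : qq 0 ≠ 0)
    (hP : ∀ x : ℝ, 1 ≤ x → P x = x^9 * pp x⁻¹)
    (hQ : ∀ x : ℝ, 1 ≤ x → Q x = x^9 * qq x⁻¹) :
    Tendsto (fun n : ℕ => P n / Q n) atTop (nhds (pp 0 / qq 0)) := by
  have h1 : Tendsto (fun n : ℕ => ((n:ℝ))⁻¹) atTop (nhds 0) :=
    tendsto_inv_atTop_zero.comp tendsto_natCast_atTop_atTop
  have h2 : Tendsto (fun n : ℕ => pp ((n:ℝ)⁻¹) / qq ((n:ℝ)⁻¹)) atTop
      (nhds (pp 0 / qq 0)) :=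
    (((hp.tendsto 0).comp h1).div ((hq.tendsto 0).comp h1) h0)
  refine h2.congr' ?_
  filter_upwards [eventually_ge_atTop 1] with n hn
  have hn1 : (1:ℝ) ≤ (n:ℝ) := by exact_mod_cast hn
  have hne : ((n:ℝ))^9 ≠ 0 := pow_ne_zero _ (by linarith)
  rw [hP _ hn1, hQ _ hn1, mul_div_mul_left _ _ hne]

lemma tendsto_CA : Tendsto (fun n : ℕ => CA n) atTop (nhds (-2368)) := by
  have h := ratlim A1 D
    (fun u => 2*(48802112 + 89030880*u + 36002654*u^2 - 24317344*u^3
      - 19538418*u^4 + 1311365*u^5 + 3790503*u^6 + 460056*u^7 - 271701*u^8 - 60291*u^9))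
    (fun u => (1+u)^6 * (41218 - 48459*u + 20010*u^2 - 2871*u^3))
    (by continuity) (by continuity) (by norm_num)
    (by intro x hx; have hx0 : x ≠ 0 := by linarith
        unfold A1; field_simp)
    (by intro x hx; have hx0 : x ≠ 0 := by linarith
        unfold D A0; field_simp)
  norm_num at h
  refine h.neg.congr (fun n => ?_)
  rw [CA, neg_div]

lemma tendsto_CB : Tendsto (fun n : ℕ => CB n) atTop (nhds 752) := by
  have h := ratlim (fun x => 4*(2*x-1)*A2 x) D
    (fun u => 4*(2-u)*(3874492 - 2617900*u - 3144314*u^2 + 2947148*u^3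
      + 647130*u^4 - 1182926*u^5 + 115771*u^6 + 170716*u^7 - 44541*u^8))
    (fun u => (1+u)^6 * (41218 - 48459*u + 20010*u^2 - 2871*u^3))
    (by continuity) (by continuity) (by norm_num)
    (by intro x hx; have hx0 : x ≠ 0 := by linarith
        unfold A2; field_simp)
    (by intro x hx; have hx0 : x ≠ 0 := by linarith
        unfold D A0; field_simp)
  norm_num at h
  exact h.congr (fun n => rfl)

lemma tendsto_CC : Tendsto (fun n : ℕ => CC n) atTop (nhds 16) := by
  have h := ratlim (fun x => 4*(x-1)^4*(2*x-1)*(2*x-3)*A0 (x+1)) D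
    (fun u => 4*(1-u)^4*(2-u)*(2-3*u)*(41218*(1+u)^3 - 48459*u*(1+u)^2
      + 20010*u^2*(1+u) - 2871*u^3))
    (fun u => (1+u)^6 * (41218 - 48459*u + 20010*u^2 - 2871*u^3))
    (by continuity) (by continuity) (by norm_num)
    (by intro x hx; have hx0 : x ≠ 0 := by linarith
        unfold A0; field_simp)
    (by intro x hx; have hx0 : x ≠ 0 := by linarith
        unfold D A0; field_simp)
  norm_num at h
  exact h.congr (fun n => rfl)

lemma decay (w eps : ℕ → ℝ) (hw : ∀ n, 0 ≤ w n) (heps : Tendsto eps atTop (nhds 0))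
    (hrec : ∀ m : ℕ, w (m+8) ≤ eps (m+8) + (1/1000)*(w (m+7) + w (m+6))) :
    Tendsto w atTop (nhds 0) := by
  rw [Metric.tendsto_atTop]
  intro δ hδ
  obtain ⟨N1, hN1⟩ := (Metric.tendsto_atTop.1 heps) (δ/4) (by linarith)
  have hN1' : ∀ n, N1 ≤ n → eps n < δ/4 := by
    intro n hn
    have := hN1 n hn
    rw [Real.dist_eq, sub_zero] at this
    exact lt_of_le_of_lt (le_abs_self _) this
  set N := N1 + 8 with hN
  have hstep : ∀ k : ℕ, w (N+k+2) ≤ eps (N+k+2) + (1/1000)*(w (N+k+1) + w (N+k)) := by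
    intro k
    have h := hrec (N1 + k + 2)
    have e1 : N1 + k + 2 + 8 = N + k + 2 := by omega
    have e2 : N1 + k + 2 + 7 = N + k + 1 := by omega
    have e3 : N1 + k + 2 + 6 = N + k := by omega
    rwa [e1, e2, e3] at h
  set M0 := max (max (w N) (w (N+1))) (δ/2) with hM0
  have hM0δ : δ/2 ≤ M0 := le_max_right _ _
  have claim1 : ∀ k : ℕ, w (N+k) ≤ M0 ∧ w (N+k+1) ≤ M0 := by
    intro k
    induction k with
    | zero => exact ⟨le_max_of_le_left (le_max_left _ _), le_max_of_le_left (le_max_right _ _)⟩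
    | succ k ih =>
      have h := hstep k
      have he := hN1' (N+k+2) (by omega)
      have h2 : w (N+k+2) ≤ M0 := by nlinarith [ih.1, ih.2, hM0δ]
      exact ⟨ih.2, h2⟩
  have claim2 : ∀ k n : ℕ, w (N + (2*k + n)) ≤ δ/2 + (1/500)^k * M0 := by
    intro k
    induction k with
    | zero =>
      intro n
      have e : N + (2*0 + n) = N + n := by omega
      rw [e]
      have := (claim1 n).1
      norm_num
      linarith
    | succ k ih =>
      intro n
      have h := hstep (2*k + n)
      have e : N + (2*(k+1) + n) = N + (2*k+n) + 2 := by omega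
      rw [e]
      have h1 := ih (n+1)
      have h2 := ih n
      have e1 : N + (2*k + (n+1)) = N + (2*k+n) + 1 := by omega
      rw [e1] at h1
      have he := hN1' (N + (2*k+n) + 2) (by omega)
      have hp : ((1:ℝ)/500)^(k+1) = (1/500) * (1/500)^k := by ring
      rw [hp]
      nlinarith [h, h1, h2, he]
  have hM0pos : 0 < M0 := lt_of_lt_of_le (by linarith) hM0δ
  obtain ⟨k, hk⟩ : ∃ k : ℕ, ((1:ℝ)/500)^k < δ/(4*M0) := by
    refine exists_pow_lt_of_lt_one (by positivity) (by norm_num)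
  refine ⟨N + 2*k, fun n hn => ?_⟩
  have e : n = N + (2*k + (n - N - 2*k)) := by omega
  have h := claim2 k (n - N - 2*k)
  rw [← e] at h
  have hlt : (1/500:ℝ)^k * M0 < δ/4 := by
    rw [lt_div_iff₀ (by positivity : (0:ℝ) < 4*M0)] at hk
    nlinarith
  rw [Real.dist_eq, sub_zero, abs_of_nonneg (hw n)]
  linarith

lemma cast_a0 (x : ℚ) : ((a0 x : ℚ) : ℝ) = A0 (x : ℝ) := by
  unfold a0 A0; push_cast; ring

lemma cast_a1 (x : ℚ) : ((a1 x : ℚ) : ℝ) = A1 (x : ℝ) := by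
  unfold a1 A1; push_cast; ring

lemma cast_a2 (x : ℚ) : ((a2 x : ℚ) : ℝ) = A2 (x : ℝ) := by
  unfold a2 A2; push_cast; ring

lemma recR (y : ℕ → ℚ) (hy : Rec1 y) (m : ℕ) :
    ((y (m+3) : ℚ) : ℝ) = CA ((m:ℝ)+2) * ((y (m+2) : ℚ) : ℝ)
      + CB ((m:ℝ)+2) * ((y (m+1) : ℚ) : ℝ) + CC ((m:ℝ)+2) * ((y m : ℚ) : ℝ) := by
  have h := hy (m+2) (by omega)
  simp only [show m+2-1 = m+1 from rfl, show m+2-2 = m from rfl, show m+2+1 = m+3 from rfl] at h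
  have hcast := congrArg (fun q : ℚ => (q : ℝ)) h
  push_cast [cast_a0, cast_a1, cast_a2] at hcast
  have h2 : (2:ℝ) ≤ (m:ℝ)+2 := by have : (0:ℝ) ≤ (m:ℝ) := Nat.cast_nonneg m; linarith
  have hd : ((((m:ℝ)+2)+1)^6 * A0 ((m:ℝ)+2)) ≠ 0 := by
    have := D_pos h2; rw [D] at this; exact ne_of_gt this
  rw [CA, CB, CC, D]
  rw [div_mul_eq_mul_div, div_mul_eq_mul_div, div_mul_eq_mul_div, ← add_div,
    ← add_div, eq_div_iff hd]
  linear_combination hcast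

def eps (n : ℕ) : ℝ := |CA n + 2368| + |CB n - 752|/1000 + |CC n - 16|/1000000

lemma eps_tendsto : Tendsto eps atTop (nhds 0) := by
  have h1 : Tendsto (fun n : ℕ => |CA n + 2368|) atTop (nhds 0) := by
    have := (tendsto_CA.add (tendsto_const_nhds (x := (2368:ℝ)))).abs
    norm_num at this
    exact this
  have h2 : Tendsto (fun n : ℕ => |CB n - 752|/1000) atTop (nhds 0) := by
    have := ((tendsto_CB.sub (tendsto_const_nhds (x := (752:ℝ)))).abs).div_const 1000
    norm_num at this
    exact this
  have h3 : Tendsto (fun n : ℕ => |CC n - 16|/1000000) atTop (nhds 0) := by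
    have := ((tendsto_CC.sub (tendsto_const_nhds (x := (16:ℝ)))).abs).div_const 1000000
    norm_num at this
    exact this
  have := (h1.add h2).add h3
  norm_num at this
  exact this

lemma key (y : ℕ → ℚ) (hy : Rec1 y) (h4 : y 4 ≠ 0)
    (h5 : 1000 * |y 4| ≤ |y 5|) (h6 : 1000 * |y 5| ≤ |y 6|)
    (μ3 : ℝ) (hμ3root : μ3^3 + 2368*μ3^2 - 752*μ3 - 16 = 0)
    (hμ3mem : μ3 ∈ Set.Ioo (-2369 : ℝ) (-2368)) :
    Tendsto (fun n : ℕ => Real.log |(y n : ℝ)| / (n : ℝ)) atTop (nhds (Real.log |μ3|)) := by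
  obtain ⟨hμl, hμu⟩ := hμ3mem
  have hμne : μ3 ≠ 0 := by intro h; rw [h] at hμu; norm_num at hμu
  have hμa1 : 2368 ≤ |μ3| := by rw [abs_of_neg (by linarith)]; linarith
  have hμa2 : |μ3| ≤ 2369 := by rw [abs_of_neg (by linarith)]; linarith
  set Y : ℕ → ℝ := fun n => ((y n : ℚ) : ℝ) with hYdef
  have hY3 : ∀ m : ℕ, Y (m+3) = CA ((m:ℝ)+2) * Y (m+2) + CB ((m:ℝ)+2) * Y (m+1)
      + CC ((m:ℝ)+2) * Y m := fun m => recR y hy m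
  have H4 : Y 4 ≠ 0 := by simpa [hYdef] using (Rat.cast_ne_zero (α := ℝ)).2 h4
  have H5 : 1000 * |Y 4| ≤ |Y 5| := by
    show (1000:ℝ) * |((y 4 : ℚ):ℝ)| ≤ |((y 5 : ℚ):ℝ)|
    exact_mod_cast h5
  have H6 : 1000 * |Y 5| ≤ |Y 6| := by
    show (1000:ℝ) * |((y 5 : ℚ):ℝ)| ≤ |((y 6 : ℚ):ℝ)|
    exact_mod_cast h6
  -- the cone
  have cone2 : ∀ n : ℕ, 1000 * |Y (n+4)| ≤ |Y (n+5)| ∧ 1000 * |Y (n+5)| ≤ |Y (n+6)| := by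
    intro n
    induction n with
    | zero => exact ⟨H5, H6⟩
    | succ n ih =>
      obtain ⟨ih1, ih2⟩ := ih
      refine ⟨ih2, ?_⟩
      have hrec := hY3 (n+4)
      have hc : ((n+4:ℕ):ℝ) = (n:ℝ)+4 := by push_cast; ring
      rw [hc] at hrec
      set x : ℝ := (n:ℝ)+4+2 with hxdef
      have hx6 : (6:ℝ) ≤ x := by
        have : (0:ℝ) ≤ (n:ℝ) := Nat.cast_nonneg n
        rw [hxdef]; linarith
      have hCAu := CA_ub hx6
      have hCBl := CB_lb hx6
      have hCBu := CB_ub hx6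
      have hCCl := CC_lb hx6
      have hCCu := CC_ub hx6
      have habs : |CA x * Y (n+6)| - |CB x * Y (n+5)| - |CC x * Y (n+4)| ≤ |Y (n+7)| := by
        have hs : CA x * Y (n+6) = (CA x * Y (n+6) + CB x * Y (n+5) + CC x * Y (n+4))
            + (-(CB x * Y (n+5))) + (-(CC x * Y (n+4))) := by ring
        have t3 : |CA x * Y (n+6)| ≤ |CA x * Y (n+6) + CB x * Y (n+5) + CC x * Y (n+4)|
            + |CB x * Y (n+5)| + |CC x * Y (n+4)| := by
          calc |CA x * Y (n+6)|
              = |(CA x * Y (n+6) + CB x * Y (n+5) + CC x * Y (n+4))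
                + (-(CB x * Y (n+5))) + (-(CC x * Y (n+4)))| := by rw [← hs]
            _ ≤ |(CA x * Y (n+6) + CB x * Y (n+5) + CC x * Y (n+4))
                + (-(CB x * Y (n+5)))| + |(-(CC x * Y (n+4)))| := abs_add_le _ _
            _ ≤ |CA x * Y (n+6) + CB x * Y (n+5) + CC x * Y (n+4)|
                + |(-(CB x * Y (n+5)))| + |(-(CC x * Y (n+4)))| := by
                  have := abs_add_le (CA x * Y (n+6) + CB x * Y (n+5) + CC x * Y (n+4))
                    (-(CB x * Y (n+5)))
                  linarith
            _ = |CA x * Y (n+6) + CB x * Y (n+5) + CC x * Y (n+4)|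
                + |CB x * Y (n+5)| + |CC x * Y (n+4)| := by rw [abs_neg, abs_neg]
        have : Y (n+7) = CA x * Y (n+6) + CB x * Y (n+5) + CC x * Y (n+4) := hrec
        rw [this]
        linarith
      have c1 : 1500 * |Y (n+6)| ≤ |CA x * Y (n+6)| := by
        rw [abs_mul]
        have h1 : (1500:ℝ) ≤ |CA x| := by rw [abs_of_nonpos (by linarith)]; linarith
        exact mul_le_mul_of_nonneg_right h1 (abs_nonneg _)
      have c2 : |CB x * Y (n+5)| ≤ 800 * (|Y (n+6)|/1000) := by
        rw [abs_mul, abs_of_nonneg hCBl]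
        have h1 : |Y (n+5)| ≤ |Y (n+6)|/1000 := by linarith
        exact mul_le_mul hCBu h1 (abs_nonneg _) (by norm_num)
      have c3 : |CC x * Y (n+4)| ≤ 20 * (|Y (n+6)|/1000000) := by
        rw [abs_mul, abs_of_nonneg hCCl]
        have h1 : |Y (n+4)| ≤ |Y (n+6)|/1000000 := by
          have h2 : |Y (n+5)| ≤ |Y (n+6)|/1000 := by linarith
          linarith
        exact mul_le_mul hCCu h1 (abs_nonneg _) (by norm_num)
      have hY6nn : (0:ℝ) ≤ |Y (n+6)| := abs_nonneg _
      have : 1000 * |Y (n+6)| ≤ |Y (n+7)| := by linarith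
      exact this
  have cone : ∀ n, 4 ≤ n → 1000 * |Y n| ≤ |Y (n+1)| := by
    intro n hn
    obtain ⟨k, rfl⟩ : ∃ k, n = k + 4 := ⟨n - 4, by omega⟩
    exact (cone2 k).1
  have Ypos : ∀ n, 4 ≤ n → 0 < |Y n| := by
    intro n hn
    induction n with
    | zero => omega
    | succ n ih =>
      rcases Nat.lt_or_ge n 4 with h | h
      · have : n + 1 = 4 := by omega
        rw [this]
        exact abs_pos.2 H4
      · have := cone n h
        have := ih h
        linarith
  have Yne : ∀ n, 4 ≤ n → Y n ≠ 0 := fun n hn => abs_pos.1 (Ypos n hn)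
  set r : ℕ → ℝ := fun n => Y (n+1) / Y n with hrdef
  have hr_lb : ∀ n, 4 ≤ n → 1000 ≤ |r n| := by
    intro n hn
    have h0 := Ypos n hn
    have h1 := cone n hn
    rw [hrdef]
    simp only []
    rw [abs_div, le_div_iff₀ h0]
    linarith
  have hrne : ∀ n, 4 ≤ n → r n ≠ 0 := by
    intro n hn
    have := hr_lb n hn
    intro h
    rw [h] at this
    simp at this
    linarith
  have hr_ub : ∀ n, 6 ≤ n → |r n| ≤ 2401 := by
    intro n hn
    obtain ⟨m, rfl⟩ : ∃ m, n = m + 6 := ⟨n - 6, by omega⟩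
    have hrec := hY3 (m+4)
    have hc : ((m+4:ℕ):ℝ) = (m:ℝ)+4 := by push_cast; ring
    rw [hc] at hrec
    set x : ℝ := (m:ℝ)+4+2 with hxdef
    have hx6 : (6:ℝ) ≤ x := by
      have : (0:ℝ) ≤ (m:ℝ) := Nat.cast_nonneg m
      rw [hxdef]; linarith
    have hup : |Y (m+7)| ≤ 2401 * |Y (m+6)| := by
      have h1 : |Y (m+7)| ≤ |CA x * Y (m+6)| + |CB x * Y (m+5)| + |CC x * Y (m+4)| := by
        have : Y (m+7) = CA x * Y (m+6) + CB x * Y (m+5) + CC x * Y (m+4) := hrec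
        rw [this]
        have t1 := abs_add_le (CA x * Y (m+6) + CB x * Y (m+5)) (CC x * Y (m+4))
        have t2 := abs_add_le (CA x * Y (m+6)) (CB x * Y (m+5))
        linarith
      have ih1 := (cone2 m).1
      have ih2 := (cone2 m).2
      have c1 : |CA x * Y (m+6)| ≤ 2400 * |Y (m+6)| := by
        rw [abs_mul]
        have : |CA x| ≤ 2400 := by
          rw [abs_of_nonpos (by linarith [CA_ub hx6])]
          linarith [CA_lb hx6]
        exact mul_le_mul_of_nonneg_right this (abs_nonneg _)
      have c2 : |CB x * Y (m+5)| ≤ 800 * (|Y (m+6)|/1000) := by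
        rw [abs_mul, abs_of_nonneg (CB_lb hx6)]
        exact mul_le_mul (CB_ub hx6) (by linarith) (abs_nonneg _) (by norm_num)
      have c3 : |CC x * Y (m+4)| ≤ 20 * (|Y (m+6)|/1000000) := by
        rw [abs_mul, abs_of_nonneg (CC_lb hx6)]
        refine mul_le_mul (CC_ub hx6) (by linarith) (abs_nonneg _) (by norm_num)
      have hY6 : 0 ≤ |Y (m+6)| := abs_nonneg _
      linarith
    have h0 := Ypos (m+6) (by omega)
    rw [hrdef]
    simp only []
    rw [abs_div, div_le_iff₀ h0]
    linarith [hup]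
  -- ratio recurrence
  have hrr : ∀ m, 4 ≤ m → r (m+2) = CA ((m:ℝ)+2) + CB ((m:ℝ)+2) / r (m+1)
      + CC ((m:ℝ)+2) / (r (m+1) * r m) := by
    intro m hm
    have hY0 := Yne m hm
    have hY1 := Yne (m+1) (by omega)
    have hY2 := Yne (m+2) (by omega)
    have hrec := hY3 m
    rw [hrdef]
    simp only []
    rw [hrec]
    field_simp
  -- contraction
  have hkey : ∀ m, 6 ≤ m → |r (m+2) - μ3| ≤ eps (m+2)
      + (1/1000)*(|r (m+1) - μ3| + |r m - μ3|) := by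
    intro m hm
    have hx : ((m+2:ℕ):ℝ) = (m:ℝ)+2 := by push_cast; ring
    set x : ℝ := (m:ℝ)+2 with hxdef
    set u : ℝ := r (m+1) with hudef
    set v : ℝ := r m with hvdef
    have hu1 : 1000 ≤ |u| := hr_lb (m+1) (by omega)
    have hu2 : |u| ≤ 2401 := hr_ub (m+1) (by omega)
    have hv1 : 1000 ≤ |v| := hr_lb m (by omega)
    have hv2 : |v| ≤ 2401 := hr_ub m (by omega)
    have hune : u ≠ 0 := hrne (m+1) (by omega)
    have hvne : v ≠ 0 := hrne m (by omega)
    have hid : r (m+2) - μ3 = (CA x + 2368) + (CB x - 752)/u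
        + 752*(μ3 - u)/(u*μ3) + (CC x - 16)/(u*v)
        + 16*((μ3 - v)*μ3 + v*(μ3 - u))/(u*v*μ3^2) := by
      rw [hrr m (by omega)]
      have key : ∀ a b c e f g : ℝ, a ≠ 0 → b ≠ 0 → g ≠ 0 → g^3 + 2368*g^2 - 752*g - 16 = 0 →
          c + e/a + f/(a*b) - g = (c+2368) + (e-752)/a + 752*(g-a)/(a*g) + (f-16)/(a*b)
            + 16*((g-b)*g + b*(g-a))/(a*b*g^2) := by
        intro a b c e f g ha hb hg h
        field_simp
        linear_combination (-(a*b)) * h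
      exact key u v (CA x) (CB x) (CC x) μ3 hune hvne hμne hμ3root
    have t2 : |(CB x - 752)/u| ≤ |CB x - 752|/1000 := by
      rw [abs_div]
      exact div_le_div_of_nonneg_left (abs_nonneg _) (by norm_num) hu1
    have t3 : |752*(μ3 - u)/(u*μ3)| ≤ (752/(1000*2368)) * |u - μ3| := by
      rw [abs_div, abs_mul, abs_mul, abs_sub_comm μ3 u]
      have h752 : |(752:ℝ)| = 752 := by norm_num
      rw [h752]
      have hden : (1000*2368:ℝ) ≤ |u| * |μ3| := by nlinarith
      have h1 : 752 * |u - μ3| / (|u| * |μ3|) ≤ 752 * |u - μ3| / (1000*2368) :=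
        div_le_div_of_nonneg_left (by positivity) (by norm_num) hden
      have h2 : (752/(1000*2368):ℝ) * |u - μ3| = 752 * |u - μ3| / (1000*2368) := by ring
      rw [h2]
      exact h1
    have t4 : |(CC x - 16)/(u*v)| ≤ |CC x - 16|/1000000 := by
      rw [abs_div, abs_mul]
      have huv : (1000000:ℝ) ≤ |u| * |v| := by nlinarith
      exact div_le_div_of_nonneg_left (abs_nonneg _) (by norm_num) huv
    have t5 : |16*((μ3 - v)*μ3 + v*(μ3 - u))/(u*v*μ3^2)|
        ≤ 16*(2369*|v - μ3| + 2401*|u - μ3|)/(1000000*2368^2) := by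
      rw [abs_div]
      have hnum : |16*((μ3 - v)*μ3 + v*(μ3 - u))| ≤ 16*(2369*|v - μ3| + 2401*|u - μ3|) := by
        rw [abs_mul]
        have h16 : |(16:ℝ)| = 16 := by norm_num
        rw [h16]
        have h1 : |(μ3 - v)*μ3 + v*(μ3 - u)| ≤ |(μ3 - v)*μ3| + |v*(μ3 - u)| := abs_add_le _ _
        have h2 : |(μ3 - v)*μ3| = |v - μ3| * |μ3| := by rw [abs_mul, abs_sub_comm μ3 v]
        have h3 : |v*(μ3 - u)| = |v| * |u - μ3| := by rw [abs_mul, abs_sub_comm μ3 u]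
        have h4 : |v - μ3| * |μ3| ≤ 2369 * |v - μ3| := by nlinarith [abs_nonneg (v - μ3)]
        have h5 : |v| * |u - μ3| ≤ 2401 * |u - μ3| := by nlinarith [abs_nonneg (u - μ3)]
        nlinarith [abs_nonneg ((μ3 - v)*μ3 + v*(μ3 - u))]
      have hden : (1000000*2368^2:ℝ) ≤ |u*v*μ3^2| := by
        rw [abs_mul, abs_mul, abs_pow]
        have p1 : (1000000:ℝ) ≤ |u| * |v| := by nlinarith
        have p2 : ((2368:ℝ))^2 ≤ |μ3|^2 := by nlinarith [abs_nonneg μ3]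
        nlinarith [mul_le_mul p1 p2 (by positivity) (by positivity : (0:ℝ) ≤ |u| * |v|)]
      exact div_le_div₀ (by positivity) hnum (by norm_num) hden
    -- combine the five bounds
    have hsum : |r (m+2) - μ3| ≤ |CA x + 2368| + |(CB x - 752)/u|
        + |752*(μ3 - u)/(u*μ3)| + |(CC x - 16)/(u*v)|
        + |16*((μ3 - v)*μ3 + v*(μ3 - u))/(u*v*μ3^2)| := by
      rw [hid]
      have a1 := abs_add_le ((CA x + 2368) + (CB x - 752)/u + 752*(μ3 - u)/(u*μ3)
        + (CC x - 16)/(u*v)) (16*((μ3 - v)*μ3 + v*(μ3 - u))/(u*v*μ3^2))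
      have a2 := abs_add_le ((CA x + 2368) + (CB x - 752)/u + 752*(μ3 - u)/(u*μ3))
        ((CC x - 16)/(u*v))
      have a3 := abs_add_le ((CA x + 2368) + (CB x - 752)/u) (752*(μ3 - u)/(u*μ3))
      have a4 := abs_add_le (CA x + 2368) ((CB x - 752)/u)
      linarith
    have hepsx : eps (m+2) = |CA x + 2368| + |CB x - 752|/1000 + |CC x - 16|/1000000 := by
      rw [eps, hx]
    rw [hepsx]
    have n1 : (752/(1000*2368):ℝ) * |u - μ3| + 16*(2369*|v - μ3| + 2401*|u - μ3|)/(1000000*2368^2)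
        ≤ (1/1000)*(|u - μ3| + |v - μ3|) := by
      have b1 := abs_nonneg (u - μ3)
      have b2 := abs_nonneg (v - μ3)
      nlinarith
    have hu' : |r (m+1) - μ3| = |u - μ3| := rfl
    have hv' : |r m - μ3| = |v - μ3| := rfl
    rw [hu', hv']
    linarith
  -- decay of |r n - μ3|
  set w : ℕ → ℝ := fun n => |r n - μ3| with hwdef
  have hw0 : ∀ n, 0 ≤ w n := fun n => abs_nonneg _
  have hrec8 : ∀ j : ℕ, w (j+8) ≤ eps (j+8) + (1/1000)*(w (j+7) + w (j+6)) := by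
    intro j
    have h := hkey (j+6) (by omega)
    have e1 : j+6+2 = j+8 := by omega
    have e2 : j+6+1 = j+7 := by omega
    rw [e1, e2] at h
    exact h
  have hwt : Tendsto w atTop (nhds 0) := decay w eps hw0 eps_tendsto hrec8
  have hrt : Tendsto r atTop (nhds μ3) := by
    rw [tendsto_iff_dist_tendsto_zero]
    simpa [Real.dist_eq] using hwt
  have hra : Tendsto (fun n => |r n|) atTop (nhds |μ3|) := hrt.abs
  have hlogr : Tendsto (fun n => Real.log |r n|) atTop (nhds (Real.log |μ3|)) := by
    have hc : ContinuousAt Real.log |μ3| := Real.continuousAt_log (abs_ne_zero.2 hμne)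
    exact hc.tendsto.comp hra
  set U : ℕ → ℝ := fun i => Real.log |r (i+4)| with hUdef
  have htu : Tendsto U atTop (nhds (Real.log |μ3|)) := hlogr.comp (tendsto_add_atTop_nat 4)
  have hces := htu.cesaro
  have hsum : ∀ m : ℕ, Real.log |Y (m+4)| = Real.log |Y 4| + ∑ i ∈ Finset.range m, U i := by
    intro m
    induction m with
    | zero => simp
    | succ m ih =>
      rw [Finset.sum_range_succ, ← add_assoc, ← ih]
      have hYm := Yne (m+4) (by omega)
      have hrm := hrne (m+4) (by omega)
      have h1 : Y (m+4+1) = r (m+4) * Y (m+4) := by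
        rw [hrdef]
        simp only []
        field_simp
      have e : m+1+4 = m+4+1 := by omega
      rw [e, h1, abs_mul, Real.log_mul (abs_ne_zero.2 hrm) (abs_ne_zero.2 hYm)]
      exact add_comm _ _
  have hfin : Tendsto (fun m : ℕ => Real.log |Y (m+4)| / ((m+4:ℕ):ℝ)) atTop
      (nhds (Real.log |μ3|)) := by
    have hT1 : Tendsto (fun m : ℕ => ((m:ℝ)+4)) atTop atTop :=
      tendsto_atTop_add_const_right _ 4 tendsto_natCast_atTop_atTop
    have T1 : Tendsto (fun m : ℕ => Real.log |Y 4| / ((m:ℝ)+4)) atTop (nhds 0) :=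
      tendsto_const_nhds.div_atTop hT1
    have T4 : Tendsto (fun m : ℕ => 4/((m:ℝ)+4)) atTop (nhds 0) :=
      tendsto_const_nhds.div_atTop hT1
    have T2 : Tendsto (fun m : ℕ => (m:ℝ)/((m:ℝ)+4)) atTop (nhds 1) := by
      have he : ∀ m : ℕ, (m:ℝ)/((m:ℝ)+4) = 1 - 4/((m:ℝ)+4) := by
        intro m
        have h0 : (m:ℝ)+4 ≠ 0 := by positivity
        field_simp
        ring
      have := tendsto_const_nhds (x := (1:ℝ)) (f := atTop (α := ℕ)) |>.sub T4
      norm_num at this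
      exact this.congr (fun m => (he m).symm)
    have Tmain := T1.add (T2.mul hces)
    rw [zero_add, one_mul] at Tmain
    refine Tmain.congr' ?_
    filter_upwards [eventually_ge_atTop 1] with m hm
    have hm0 : (m:ℝ) ≠ 0 := by
      have : (0:ℕ) < m := hm
      exact_mod_cast Nat.pos_iff_ne_zero.1 this
    have hm4 : (m:ℝ)+4 ≠ 0 := by positivity
    have h44 : ((m+4:ℕ):ℝ) = (m:ℝ)+4 := by push_cast; ring
    rw [h44, hsum m]
    field_simp
  exact (tendsto_add_atTop_iff_nat (f := fun n : ℕ => Real.log |Y n| / (n:ℝ)) 4).1 hfin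

/-- `lim (log |q_n|)/n = lim (log |p_n|)/n = lim (log |p̃_n|)/n = log |μ₃|`, where `μ₃` is the
(unique) root of `μ³ + 2368 μ² − 752 μ − 16` lying in the interval `(−2369, −2368)`. -/
theorem stmt2
    (q p pt : ℕ → ℚ)
    (hq : Rec1 q) (hp : Rec1 p) (hpt : Rec1 pt)
    (hq0 : q 0 = -1) (hq1 : q 1 = 42) (hq2 : q 2 = -17934)
    (hp0 : p 0 = 0) (hp1 : p 1 = 87/2) (hp2 : p 2 = -1190161/64)
    (hpt0 : pt 0 = 0) (hpt1 : pt 1 = 101/2) (hpt2 : pt 2 = -344923/16)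
    (μ3 : ℝ) (hμ3root : μ3^3 + 2368*μ3^2 - 752*μ3 - 16 = 0)
    (hμ3mem : μ3 ∈ Set.Ioo (-2369 : ℝ) (-2368)) :
    Tendsto (fun n : ℕ => Real.log |(q n : ℝ)| / (n : ℝ)) atTop (nhds (Real.log |μ3|)) ∧
    Tendsto (fun n : ℕ => Real.log |(p n : ℝ)| / (n : ℝ)) atTop (nhds (Real.log |μ3|)) ∧
    Tendsto (fun n : ℕ => Real.log |(pt n : ℝ)| / (n : ℝ)) atTop (nhds (Real.log |μ3|)) := by
  refine ⟨?_, ?_, ?_⟩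
  · have h3 : q 3 = 14290980 := by
      have e := hq 2 (by norm_num); norm_num [a0, a1, a2, hq0, hq1, hq2] at e; linarith
    have h4 : q 4 = -15226085070 := by
      have e := hq 3 (by norm_num); norm_num [a0, a1, a2, hq1, hq2, h3] at e; linarith
    have h5 : q 5 = 19191613019292 := by
      have e := hq 4 (by norm_num); norm_num [a0, a1, a2, hq2, h3, h4] at e; linarith
    have h6 : q 6 = -26992352388411564 := by
      have e := hq 5 (by norm_num); norm_num [a0, a1, a2, h3, h4, h5] at e; linarith
    exact key q hq (by rw [h4]; norm_num)
      (by rw [h4, h5]; norm_num [abs_of_neg, abs_of_pos])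
      (by rw [h5, h6]; norm_num [abs_of_neg, abs_of_pos])
      μ3 hμ3root hμ3mem
  · have h3 : p 3 = 38410106195/2592 := by
      have e := hp 2 (by norm_num); norm_num [a0, a1, a2, hp0, hp1, hp2] at e; linarith
    have h4 : p 4 = -873032613281675/55296 := by
      have e := hp 3 (by norm_num); norm_num [a0, a1, a2, hp1, hp2, h3] at e; linarith
    have h5 : p 5 = 573129106723432091021/28800000 := by
      have e := hp 4 (by norm_num); norm_num [a0, a1, a2, hp2, h3, h4] at e; linarith
    have h6 : p 6 = -21764339220676847947083239/777600000 := by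
      have e := hp 5 (by norm_num); norm_num [a0, a1, a2, h3, h4, h5] at e; linarith
    exact key p hp (by rw [h4]; norm_num)
      (by rw [h4, h5]; norm_num [abs_of_neg, abs_of_pos])
      (by rw [h5, h6]; norm_num [abs_of_neg, abs_of_pos])
      μ3 hμ3root hμ3mem
  · have h3 : pt 3 = 3710571371/216 := by
      have e := hpt 2 (by norm_num); norm_num [a0, a1, a2, hpt0, hpt1, hpt2] at e; linarith
    have h4 : pt 4 = -21084619007795/1152 := by
      have e := hpt 3 (by norm_num); norm_num [a0, a1, a2, hpt1, hpt2, h3] at e; linarith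
    have h5 : pt 5 = 553665861902579821/24000 := by
      have e := hpt 4 (by norm_num); norm_num [a0, a1, a2, hpt2, h3, h4] at e; linarith
    have h6 : pt 6 = -7008410200537400306813/216000 := by
      have e := hpt 5 (by norm_num); norm_num [a0, a1, a2, h3, h4, h5] at e; linarith
    exact key pt hpt (by rw [h4]; norm_num)
      (by rw [h4, h5]; norm_num [abs_of_neg, abs_of_pos])
      (by rw [h5, h6]; norm_num [abs_of_neg, abs_of_pos])
      μ3 hμ3root hμ3mem
end
end

section
/- The sequences {q_n}, {p_n}, {p̃_n} are of alternating sign: for all integers n ≥ 1, (−1)^{n−1} q_n > 0, (−1)^{n−1} p_n > 0, and (−1)^{n−1} p̃_n > 0. -/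
noncomputable section

open Filter


lemma key0 (x : ℚ) (hx : 2 ≤ x) : 0 < a0 x := by
  have ht : 0 ≤ x - 2 := by linarith
  have e : a0 x = 41218*(x-2)^3 + 198849*(x-2)^2 + 320790*(x-2) + 173057 := by
    unfold a0; ring
  have h2 := pow_nonneg ht 2
  have h3 := pow_nonneg ht 3
  linarith [e.ge, e.le]

lemma key2 (x : ℚ) (hx : 2 ≤ x) : 0 ≤ a2 x := by
  have ht : 0 ≤ x - 2 := by linarith
  have e : a2 x = 3874492*(x-2)^8 + 59373972*(x-2)^7 + 394148190*(x-2)^6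
      + 1481084196*(x-2)^5 + 3447878810*(x-2)^4 + 5095855458*(x-2)^3
      + 4673546679*(x-2)^2 + 2433871008*(x-2) + 551502039 := by
    unfold a2; ring
  have h2 := pow_nonneg ht 2
  have h3 := pow_nonneg ht 3
  have h4 := pow_nonneg ht 4
  have h5 := pow_nonneg ht 5
  have h6 := pow_nonneg ht 6
  have h7 := pow_nonneg ht 7
  have h8 := pow_nonneg ht 8
  linarith [e.ge, e.le]

lemma key1 (x : ℚ) (hx : 2 ≤ x) :
    (x+1)^6 * a0 x + 4*(x-1)^4*(2*x-1)*(2*x-3) * a0 (x+1) < a1 x := by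
  have ht : 0 ≤ x - 2 := by linarith
  have e : a1 x - ((x+1)^6 * a0 x + 4*(x-1)^4*(2*x-1)*(2*x-3) * a0 (x+1))
      = 96903518*(x-2)^9 + 1924880043*(x-2)^8 + 16912375214*(x-2)^7
      + 86256116424*(x-2)^6 + 281387511582*(x-2)^5 + 608824202064*(x-2)^4
      + 873579406172*(x-2)^3 + 801492680940*(x-2)^2 + 426632789982*(x-2)
      + 100380893157 := by
    unfold a0 a1; ring
  have h2 := pow_nonneg ht 2
  have h3 := pow_nonneg ht 3
  have h4 := pow_nonneg ht 4
  have h5 := pow_nonneg ht 5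
  have h6 := pow_nonneg ht 6
  have h7 := pow_nonneg ht 7
  have h8 := pow_nonneg ht 8
  have h9 := pow_nonneg ht 9
  linarith [e.ge, e.le]
/-- signed sequence -/
def Zs (y : ℕ → ℚ) (k : ℕ) : ℚ := (-1)^(k+1) * y k


lemma step (y : ℕ → ℚ) (h : Rec1 y) (n : ℕ)
    (h0 : 0 ≤ Zs y n) (h01 : Zs y n ≤ Zs y (n+1)) (h12 : Zs y (n+1) ≤ Zs y (n+2)) :
    Zs y (n+2) ≤ Zs y (n+3) := by
  have E := h (n+2) (by omega)
  have hxn : (0:ℚ) ≤ (n:ℚ) := Nat.cast_nonneg n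
  have hx : (2:ℚ) ≤ ((n:ℚ)+2) := by linarith
  rw [show n + 2 - 1 = n + 1 from rfl, show n + 2 - 2 = n from rfl,
    show n + 2 + 1 = n + 3 from rfl] at E
  push_cast at E
  set x : ℚ := (n:ℚ) with hxdef
  have hA : 0 < (x+2+1)^6 * a0 (x+2) := by
    have h1 := key0 (x+2) hx
    have h6 : (0:ℚ) < (x+2+1)^6 := by positivity
    exact mul_pos h6 h1
  have hB : 0 ≤ 4*(2*(x+2)-1) * a2 (x+2) := by
    have h1 := key2 (x+2) hx
    have h2 : (0:ℚ) ≤ 4*(2*(x+2)-1) := by linarith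
    exact mul_nonneg h2 h1
  have hD : 0 ≤ 4*(x+2-1)^4*(2*(x+2)-1)*(2*(x+2)-3) * a0 (x+2+1) := by
    have h1 := key0 (x+2+1) (by linarith)
    have f1 : (0:ℚ) ≤ (x+2-1)^4 := by positivity
    have f2 : (0:ℚ) ≤ 2*(x+2)-1 := by linarith
    have f3 : (0:ℚ) ≤ 2*(x+2)-3 := by linarith
    exact mul_nonneg (mul_nonneg (mul_nonneg (mul_nonneg (by norm_num) f1) f2) f3) h1.le
  have hK := key1 (x+2) hx
  rcases Nat.even_or_odd n with he | ho
  · have hs : (-1:ℚ)^n = 1 := he.neg_one_pow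
    simp only [Zs, show n+1+1 = n+2 from rfl, show n+2+1 = n+3 from rfl,
      pow_succ, hs, one_mul] at h0 h01 h12 ⊢
    have H0 : 0 ≤ -y n := by linarith
    have H1 : -y n ≤ y (n+1) := by linarith
    have H2 : y (n+1) ≤ -y (n+2) := by linarith
    have final : 0 ≤ y (n+3) + y (n+2) := by
      nlinarith [E, hA, mul_nonneg hB (by linarith : (0:ℚ) ≤ y (n+1)),
        mul_nonneg hD (by linarith : (0:ℚ) ≤ y n - y (n+2)),
        mul_nonneg (by linarith : (0:ℚ) ≤ a1 (x+2) - (x+2+1)^6 * a0 (x+2)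
          - 4*(x+2-1)^4*(2*(x+2)-1)*(2*(x+2)-3) * a0 (x+2+1))
          (by linarith : (0:ℚ) ≤ -y (n+2))]
    linarith
  · have hs : (-1:ℚ)^n = -1 := ho.neg_one_pow
    simp only [Zs, show n+1+1 = n+2 from rfl, show n+2+1 = n+3 from rfl,
      pow_succ, hs, one_mul] at h0 h01 h12 ⊢
    have H0 : 0 ≤ y n := by linarith
    have H1 : y n ≤ -y (n+1) := by linarith
    have H2 : -y (n+1) ≤ y (n+2) := by linarith
    have final : 0 ≤ -y (n+3) - y (n+2) := by
      nlinarith [E, hA, mul_nonneg hB (by linarith : (0:ℚ) ≤ -y (n+1)),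
        mul_nonneg hD (by linarith : (0:ℚ) ≤ y (n+2) - y n),
        mul_nonneg (by linarith : (0:ℚ) ≤ a1 (x+2) - (x+2+1)^6 * a0 (x+2)
          - 4*(x+2-1)^4*(2*(x+2)-1)*(2*(x+2)-3) * a0 (x+2+1))
          (by linarith : (0:ℚ) ≤ y (n+2))]
    linarith

lemma altpos (y : ℕ → ℚ) (h : Rec1 y)
    (h0 : 0 ≤ Zs y 0) (h01 : Zs y 0 ≤ Zs y 1) (h1 : 0 < Zs y 1) (h12 : Zs y 1 ≤ Zs y 2) :
    ∀ n : ℕ, 1 ≤ n → 0 < (-1 : ℚ)^(n-1) * y n := by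
  have H : ∀ n : ℕ, 0 ≤ Zs y n ∧ Zs y n ≤ Zs y (n+1) ∧ Zs y (n+1) ≤ Zs y (n+2) := by
    intro n
    induction n with
    | zero => exact ⟨h0, h01, h12⟩
    | succ k ih => exact ⟨le_trans ih.1 ih.2.1, ih.2.2, step y h k ih.1 ih.2.1 ih.2.2⟩
  have P : ∀ n : ℕ, 0 < Zs y (n+1) := by
    intro n
    induction n with
    | zero => exact h1
    | succ k ih => exact lt_of_lt_of_le ih (H (k+1)).2.1
  intro n hn
  obtain ⟨m, rfl⟩ : ∃ m, n = m + 1 := ⟨n - 1, by omega⟩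
  have := P m
  simp only [Zs, pow_succ] at this
  simp only [Nat.add_sub_cancel]
  nlinarith [this]

/-- The sequences `{q_n}`, `{p_n}`, `{p̃_n}` are of alternating sign: for all `n ≥ 1`,
`(−1)^{n−1} q_n > 0`, `(−1)^{n−1} p_n > 0` and `(−1)^{n−1} p̃_n > 0`. -/
theorem stmt3
    (q p pt : ℕ → ℚ)
    (hq : Rec1 q) (hp : Rec1 p) (hpt : Rec1 pt)
    (hq0 : q 0 = -1) (hq1 : q 1 = 42) (hq2 : q 2 = -17934)
    (hp0 : p 0 = 0) (hp1 : p 1 = 87/2) (hp2 : p 2 = -1190161/64)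
    (hpt0 : pt 0 = 0) (hpt1 : pt 1 = 101/2) (hpt2 : pt 2 = -344923/16) :
    ∀ n : ℕ, 1 ≤ n →
      0 < (-1 : ℚ)^(n-1) * q n ∧
      0 < (-1 : ℚ)^(n-1) * p n ∧
      0 < (-1 : ℚ)^(n-1) * pt n := by
  intro n hn
  refine ⟨altpos q hq ?_ ?_ ?_ ?_ n hn, altpos p hp ?_ ?_ ?_ ?_ n hn,
    altpos pt hpt ?_ ?_ ?_ ?_ n hn⟩ <;>
    simp only [Zs, hq0, hq1, hq2, hp0, hp1, hp2, hpt0, hpt1, hpt2] <;> norm_num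
end
end

section
/- Let λ1, λ2, λ3 be the three real roots of λ^3 − 188λ^2 − 2368λ + 4 ordered by increasing absolute value, and let μ1, μ2, μ3 be the three real roots of μ^3 + 2368μ^2 − 752μ − 16 ordered by increasing absolute value. Then μ1 = λ1 λ2, μ2 = λ1 λ3, and μ3 = λ2 λ3. -/
noncomputable section

open Filter


/-- If `λ₁, λ₂, λ₃` are the real roots of `λ³ − 188λ² − 2368λ + 4` ordered by increasing
absolute value, and `μ₁, μ₂, μ₃` are the real roots of `μ³ + 2368μ² − 752μ − 16` ordered by
increasing absolute value, then `μ₁ = λ₁λ₂`, `μ₂ = λ₁λ₃`, `μ₃ = λ₂λ₃`. -/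
theorem stmt16
    (lam1 lam2 lam3 mu1 mu2 mu3 : ℝ)
    (hl1 : lam1^3 - 188*lam1^2 - 2368*lam1 + 4 = 0)
    (hl2 : lam2^3 - 188*lam2^2 - 2368*lam2 + 4 = 0)
    (hl3 : lam3^3 - 188*lam3^2 - 2368*lam3 + 4 = 0)
    (hlord : |lam1| < |lam2| ∧ |lam2| < |lam3|)
    (hm1 : mu1^3 + 2368*mu1^2 - 752*mu1 - 16 = 0)
    (hm2 : mu2^3 + 2368*mu2^2 - 752*mu2 - 16 = 0)
    (hm3 : mu3^3 + 2368*mu3^2 - 752*mu3 - 16 = 0)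
    (hmord : |mu1| < |mu2| ∧ |mu2| < |mu3|) :
    mu1 = lam1 * lam2 ∧ mu2 = lam1 * lam3 ∧ mu3 = lam2 * lam3 := by
  obtain ⟨hlo1, hlo2⟩ := hlord
  obtain ⟨hmo1, hmo2⟩ := hmord
  have hne12 : lam1 ≠ lam2 := fun h => by rw [h] at hlo1; exact lt_irrefl _ hlo1
  have hne13 : lam1 ≠ lam3 := fun h => by rw [h] at hlo1; exact absurd (hlo1.trans hlo2) (lt_irrefl _)
  have hne23 : lam2 ≠ lam3 := fun h => by rw [h] at hlo2; exact lt_irrefl _ hlo2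
  have hz1 : lam1 ≠ 0 := by intro h; rw [h] at hl1; norm_num at hl1
  have hz2 : lam2 ≠ 0 := by intro h; rw [h] at hl2; norm_num at hl2
  have hz3 : lam3 ≠ 0 := by intro h; rw [h] at hl3; norm_num at hl3
  -- Vieta for the lambdas
  have q12 : lam1^2 + lam1*lam2 + lam2^2 - 188*(lam1+lam2) - 2368 = 0 := by
    have h : (lam1 - lam2) * (lam1^2 + lam1*lam2 + lam2^2 - 188*(lam1+lam2) - 2368) = 0 := by
      linear_combination hl1 - hl2
    rcases mul_eq_zero.mp h with h | h
    · exact absurd (sub_eq_zero.mp h) hne12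
    · exact h
  have q13 : lam1^2 + lam1*lam3 + lam3^2 - 188*(lam1+lam3) - 2368 = 0 := by
    have h : (lam1 - lam3) * (lam1^2 + lam1*lam3 + lam3^2 - 188*(lam1+lam3) - 2368) = 0 := by
      linear_combination hl1 - hl3
    rcases mul_eq_zero.mp h with h | h
    · exact absurd (sub_eq_zero.mp h) hne13
    · exact h
  have he1 : lam1 + lam2 + lam3 = 188 := by
    have h : (lam2 - lam3) * (lam1 + lam2 + lam3 - 188) = 0 := by
      linear_combination q12 - q13
    rcases mul_eq_zero.mp h with h | h
    · exact absurd (sub_eq_zero.mp h) hne23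
    · linarith [sub_eq_zero.mp h]
  have he2 : lam1*lam2 + lam1*lam3 + lam2*lam3 = -2368 := by
    linear_combination (-1 : ℝ)*q12 + (lam1+lam2)*he1
  have he3 : lam1*lam2*lam3 = -4 := by
    linear_combination hl1 + lam1*he2 - lam1^2*he1
  -- Vieta for the mus
  have mne12 : mu1 ≠ mu2 := fun h => by rw [h] at hmo1; exact lt_irrefl _ hmo1
  have mne13 : mu1 ≠ mu3 := fun h => by rw [h] at hmo1; exact absurd (hmo1.trans hmo2) (lt_irrefl _)
  have mne23 : mu2 ≠ mu3 := fun h => by rw [h] at hmo2; exact lt_irrefl _ hmo2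
  have r12 : mu1^2 + mu1*mu2 + mu2^2 + 2368*(mu1+mu2) - 752 = 0 := by
    have h : (mu1 - mu2) * (mu1^2 + mu1*mu2 + mu2^2 + 2368*(mu1+mu2) - 752) = 0 := by
      linear_combination hm1 - hm2
    rcases mul_eq_zero.mp h with h | h
    · exact absurd (sub_eq_zero.mp h) mne12
    · exact h
  have r13 : mu1^2 + mu1*mu3 + mu3^2 + 2368*(mu1+mu3) - 752 = 0 := by
    have h : (mu1 - mu3) * (mu1^2 + mu1*mu3 + mu3^2 + 2368*(mu1+mu3) - 752) = 0 := by
      linear_combination hm1 - hm3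
    rcases mul_eq_zero.mp h with h | h
    · exact absurd (sub_eq_zero.mp h) mne13
    · exact h
  have hM1 : mu1 + mu2 + mu3 = -2368 := by
    have h : (mu2 - mu3) * (mu1 + mu2 + mu3 + 2368) = 0 := by
      linear_combination r12 - r13
    rcases mul_eq_zero.mp h with h | h
    · exact absurd (sub_eq_zero.mp h) mne23
    · linarith
  have hM2 : mu1*mu2 + mu1*mu3 + mu2*mu3 = -752 := by
    linear_combination (-1 : ℝ)*r12 + (mu1+mu2)*hM1
  have hM3 : mu1*mu2*mu3 = 16 := by
    linear_combination hm1 + mu1*hM2 - mu1^2*hM1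
  -- products of the lambdas are roots of the mu-cubic
  have key : ∀ a b c : ℝ, a*b*c = -4 → c^3 - 188*c^2 - 2368*c + 4 = 0 →
      (a*b)^3 + 2368*(a*b)^2 - 752*(a*b) - 16 = 0 := by
    intro a b c habc hc
    have hcz : c ≠ 0 := by intro h; rw [h] at hc; norm_num at hc
    have h : ((a*b)^3 + 2368*(a*b)^2 - 752*(a*b) - 16) * c^3 = 0 := by
      linear_combination (-16 : ℝ)*hc +
        ((a*b*c)^2 - 4*(a*b*c) + 16 + 2368*c*(a*b*c - 4) - 752*c^2)*habc
    rcases mul_eq_zero.mp h with h | h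
    · exact h
    · exact absurd h (pow_ne_zero _ hcz)
  have hf1 : (lam1*lam2)^3 + 2368*(lam1*lam2)^2 - 752*(lam1*lam2) - 16 = 0 :=
    key lam1 lam2 lam3 he3 hl3
  have hf2 : (lam1*lam3)^3 + 2368*(lam1*lam3)^2 - 752*(lam1*lam3) - 16 = 0 := by
    refine key lam1 lam3 lam2 ?_ hl2
    linear_combination he3
  have hf3 : (lam2*lam3)^3 + 2368*(lam2*lam3)^2 - 752*(lam2*lam3) - 16 = 0 := by
    refine key lam2 lam3 lam1 ?_ hl1
    linear_combination he3
  -- any root of the mu-cubic is one of mu1, mu2, mu3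
  have mem : ∀ p : ℝ, p^3 + 2368*p^2 - 752*p - 16 = 0 → p = mu1 ∨ p = mu2 ∨ p = mu3 := by
    intro p hp
    have h : (p - mu1) * ((p - mu2) * (p - mu3)) = 0 := by
      linear_combination hp + (-p^2)*hM1 + p*hM2 + (-1 : ℝ)*hM3
    rcases mul_eq_zero.mp h with h | h
    · exact Or.inl (sub_eq_zero.mp h)
    · rcases mul_eq_zero.mp h with h | h
      · exact Or.inr (Or.inl (sub_eq_zero.mp h))
      · exact Or.inr (Or.inr (sub_eq_zero.mp h))
  have h1 := mem _ hf1
  have h2 := mem _ hf2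
  have h3 := mem _ hf3
  -- absolute value comparisons of the products
  have habs1 : |lam1*lam2| < |lam1*lam3| := by
    rw [abs_mul, abs_mul]
    exact mul_lt_mul_of_pos_left hlo2 (abs_pos.mpr hz1)
  have habs2 : |lam1*lam3| < |lam2*lam3| := by
    rw [abs_mul, abs_mul]
    exact mul_lt_mul_of_pos_right hlo1 (abs_pos.mpr hz3)
  rcases h1 with h1 | h1 | h1 <;> rcases h2 with h2 | h2 | h2 <;> rcases h3 with h3 | h3 | h3 <;>
    first
      | exact ⟨h1.symm, h2.symm, h3.symm⟩
      | (rw [h1] at habs1; rw [h2] at habs1 habs2; rw [h3] at habs2; linarith)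
end
end
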